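/- (Ceva's theorem for translation triangles in Nil.) Let A₀, A₁, A₂ ∈ ℝ³ be points of Nil whose fibre projections π(A₀), π(A₁), π(A₂) are affinely independent in ℝ². For (i,j) ∈ {(0,1),(1,2),(2,0)} let γ_{ij} be the Nil translation curve with γ_{ij}(0) = A_i and γ_{ij}(1) = A_j. Let P = γ₀₁(p), Q = γ₁₂(q), R = γ₂₀(r) with p, q, r ∉ {0, 1}. Suppose there exists a point T^p ∈ ℝ², not lying on any of the three Euclidean lines through pairs π(A_i), π(A_j), such that T^p lies on the Euclidean line through π(A₀) and π(Q), on the line through π(A₁) and π(R), and on the line through π(A₂) and π(P) (this is the fibre projection of the condition that the connecting curves A₀T, A₁T, A₂T on the translation-triangle surface pass through a common point T and meet the opposite side curves in Q, R, P). Then the Nil simple ratios satisfy (p/(1−p)) · (q/(1−q)) · (r/(1−r)) = 1. -/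

import Mathlib

/-- The Nil translation curve starting at `P = (p,q,r)` with direction `(u,v,w)`. -/
noncomputable def nilCurve (P d : ℝ × ℝ × ℝ) : ℝ → ℝ × ℝ × ℝ :=
  fun t =>
    (P.1 + d.1 * t,
     P.2.1 + d.2.1 * t,
     P.2.2 + P.1 * d.2.1 * t + d.1 * d.2.1 * t ^ 2 / 2 + d.2.2 * t)

/-- The unique Nil translation curve `γ` with `γ(0) = A` and `γ(1) = B`. -/
noncomputable def nilCurveThrough (A B : ℝ × ℝ × ℝ) : ℝ → ℝ × ℝ × ℝ :=
  nilCurve A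
    (B.1 - A.1, B.2.1 - A.2.1,
     B.2.2 - A.2.2 - A.1 * (B.2.1 - A.2.1) - (B.1 - A.1) * (B.2.1 - A.2.1) / 2)

/-- The fibre projection `π(a,b,c) = (a,b)`. -/
def fibreProj : ℝ × ℝ × ℝ → ℝ × ℝ := fun q => (q.1, q.2.1)

/-!
The fibre projection maps the Nil translation curve from `A` to `B` onto the Euclidean segment
from `π A` to `π B`, with the same affine parameter, so the statement reduces to Ceva's theorem in
the plane. There, with `aᵢ = π Aᵢ` and `x, y, z` the (doubled) signed areas of the triangles
`a₀ a₁ T`, `a₁ a₂ T`, `a₂ a₀ T`, the concurrence at `T` gives `(1 - q) x = q z`,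
`(1 - r) y = r x` and `(1 - p) z = p y`; multiplying the three and cancelling
`x y z ≠ 0` gives the result.
-/

theorem fibreProj_nilCurveThrough (A B : ℝ × ℝ × ℝ) (t : ℝ) :
    fibreProj (nilCurveThrough A B t) = AffineMap.lineMap (fibreProj A) (fibreProj B) t := by
  simp only [fibreProj, nilCurveThrough, nilCurve, AffineMap.lineMap_apply_module',
    Prod.ext_iff, Prod.fst_add, Prod.snd_add, Prod.smul_fst, Prod.smul_snd, Prod.fst_sub,
    Prod.snd_sub, smul_eq_mul]
  constructor <;> ring

def cross (u v : ℝ × ℝ) : ℝ := u.1 * v.2 - u.2 * v.1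

theorem cross_smul_self (u : ℝ × ℝ) (s : ℝ) : cross u (s • u) = 0 := by
  simp only [cross, Prod.smul_fst, Prod.smul_snd, smul_eq_mul]
  ring

theorem cross_eq_zero_iff {u v : ℝ × ℝ} (hu : u ≠ 0) : cross u v = 0 ↔ ∃ s : ℝ, s • u = v := by
  constructor
  · intro h
    have hnorm : u.1 ^ 2 + u.2 ^ 2 ≠ 0 := by
      contrapose! hu
      ext <;> simp only [Prod.fst_zero, Prod.snd_zero] <;> nlinarith [sq_nonneg u.1, sq_nonneg u.2]
    simp only [cross] at h
    refine ⟨(u.1 * v.1 + u.2 * v.2) / (u.1 ^ 2 + u.2 ^ 2), Prod.ext ?_ ?_⟩ <;>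
      simp only [Prod.smul_fst, Prod.smul_snd, smul_eq_mul] <;> field_simp
    · linear_combination u.2 * h
    · linear_combination -u.1 * h
  · rintro ⟨s, rfl⟩
    exact cross_smul_self u s

theorem mem_affineSpan_pair_iff_exists_smul_sub {a b t : ℝ × ℝ} :
    t ∈ line[ℝ, a, b] ↔ ∃ s : ℝ, s • (b - a) = t - a := by
  rw [← AffineSubspace.vsub_right_mem_direction_iff_mem (left_mem_affineSpan_pair ℝ a b),
    direction_affineSpan, mem_vectorSpan_pair_rev]
  rfl

theorem mem_affineSpan_pair_iff_cross_eq_zero {a b t : ℝ × ℝ} (hab : a ≠ b) :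
    t ∈ line[ℝ, a, b] ↔ cross (b - a) (t - a) = 0 := by
  rw [mem_affineSpan_pair_iff_exists_smul_sub, cross_eq_zero_iff (sub_ne_zero.mpr hab.symm)]

theorem cross_eq_zero_of_mem_affineSpan_pair {a b t : ℝ × ℝ} (h : t ∈ line[ℝ, a, b]) :
    cross (b - a) (t - a) = 0 := by
  obtain ⟨s, hs⟩ := mem_affineSpan_pair_iff_exists_smul_sub.mp h
  rw [← hs]
  exact cross_smul_self (b - a) s

theorem one_sub_mul_cross_eq_mul_cross_of_mem_affineSpan_lineMap {a b c t : ℝ × ℝ} {s : ℝ}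
    (h : t ∈ line[ℝ, a, AffineMap.lineMap b c s]) :
    (1 - s) * cross (b - a) (t - a) = s * cross (a - c) (t - c) := by
  have h0 := cross_eq_zero_of_mem_affineSpan_pair h
  simp only [cross, AffineMap.lineMap_apply_module', Prod.fst_add, Prod.snd_add, Prod.smul_fst,
    Prod.smul_snd, Prod.fst_sub, Prod.snd_sub, smul_eq_mul] at h0 ⊢
  linear_combination h0

theorem ratio_product_eq_one {K : Type*} [Field K] {p q r x y z : K}
    (hx : x ≠ 0) (hy : y ≠ 0) (hz : z ≠ 0) (hp : p ≠ 1) (hq : q ≠ 1) (hr : r ≠ 1)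
    (hpzy : (1 - p) * z = p * y) (hqxz : (1 - q) * x = q * z) (hryx : (1 - r) * y = r * x) :
    p / (1 - p) * (q / (1 - q)) * (r / (1 - r)) = 1 := by
  have hp' : 1 - p ≠ 0 := sub_ne_zero.mpr hp.symm
  have hq' : 1 - q ≠ 0 := sub_ne_zero.mpr hq.symm
  have hr' : 1 - r ≠ 0 := sub_ne_zero.mpr hr.symm
  have key : (1 - p) * (1 - q) * (1 - r) * (x * y * z) = p * q * r * (x * y * z) :=
    calc (1 - p) * (1 - q) * (1 - r) * (x * y * z)
        = ((1 - p) * z) * ((1 - q) * x) * ((1 - r) * y) := by ring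
      _ = (p * y) * (q * z) * (r * x) := by rw [hpzy, hqxz, hryx]
      _ = p * q * r * (x * y * z) := by ring
  field_simp
  exact (mul_right_cancel₀ (mul_ne_zero (mul_ne_zero hx hy) hz) key).symm

theorem nil_ceva_general
    (A₀ A₁ A₂ : ℝ × ℝ × ℝ)
    (hind : AffineIndependent ℝ ![fibreProj A₀, fibreProj A₁, fibreProj A₂])
    (p q r : ℝ) (hp1 : p ≠ 1) (hq1 : q ≠ 1)
    (hr1 : r ≠ 1)
    (P Q R : ℝ × ℝ × ℝ)
    (hP : P = nilCurveThrough A₀ A₁ p)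
    (hQ : Q = nilCurveThrough A₁ A₂ q)
    (hR : R = nilCurveThrough A₂ A₀ r)
    (T : ℝ × ℝ)
    (hT01 : T ∉ affineSpan ℝ {fibreProj A₀, fibreProj A₁})
    (hT12 : T ∉ affineSpan ℝ {fibreProj A₁, fibreProj A₂})
    (hT20 : T ∉ affineSpan ℝ {fibreProj A₂, fibreProj A₀})
    (h0 : T ∈ affineSpan ℝ {fibreProj A₀, fibreProj Q})
    (h1 : T ∈ affineSpan ℝ {fibreProj A₁, fibreProj R})
    (h2 : T ∈ affineSpan ℝ {fibreProj A₂, fibreProj P}) :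
    (p / (1 - p)) * (q / (1 - q)) * (r / (1 - r)) = 1 := by
  subst hP hQ hR
  rw [fibreProj_nilCurveThrough] at h0 h1 h2
  have h01 : fibreProj A₀ ≠ fibreProj A₁ := hind.injective.ne (by decide : (0 : Fin 3) ≠ 1)
  have h12 : fibreProj A₁ ≠ fibreProj A₂ := hind.injective.ne (by decide : (1 : Fin 3) ≠ 2)
  have h20 : fibreProj A₂ ≠ fibreProj A₀ := hind.injective.ne (by decide : (2 : Fin 3) ≠ 0)
  exact ratio_product_eq_one
    ((mem_affineSpan_pair_iff_cross_eq_zero h01).not.mp hT01)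
    ((mem_affineSpan_pair_iff_cross_eq_zero h12).not.mp hT12)
    ((mem_affineSpan_pair_iff_cross_eq_zero h20).not.mp hT20) hp1 hq1 hr1
    (one_sub_mul_cross_eq_mul_cross_of_mem_affineSpan_lineMap h2)
    (one_sub_mul_cross_eq_mul_cross_of_mem_affineSpan_lineMap h0)
    (one_sub_mul_cross_eq_mul_cross_of_mem_affineSpan_lineMap h1)

/-- **Ceva's theorem for translation triangles in Nil.**
If the connecting curves from the vertices of a Nil translation triangle through a
common point `T` of its surface meet the opposite side translation curves in
`Q`, `R`, `P` (expressed, via the fibre projection, by the concurrence of the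
corresponding Euclidean lines at the projection `T^p` of `T`), then the product of
the three Nil simple ratios `p/(1−p)`, `q/(1−q)`, `r/(1−r)` equals `1`. -/
theorem nil_ceva
    (A₀ A₁ A₂ : ℝ × ℝ × ℝ)
    (hind : AffineIndependent ℝ ![fibreProj A₀, fibreProj A₁, fibreProj A₂])
    (p q r : ℝ) (hp0 : p ≠ 0) (hp1 : p ≠ 1) (hq0 : q ≠ 0) (hq1 : q ≠ 1)
    (hr0 : r ≠ 0) (hr1 : r ≠ 1)
    (P Q R : ℝ × ℝ × ℝ)
    (hP : P = nilCurveThrough A₀ A₁ p)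
    (hQ : Q = nilCurveThrough A₁ A₂ q)
    (hR : R = nilCurveThrough A₂ A₀ r)
    (T : ℝ × ℝ)
    (hT01 : T ∉ affineSpan ℝ {fibreProj A₀, fibreProj A₁})
    (hT12 : T ∉ affineSpan ℝ {fibreProj A₁, fibreProj A₂})
    (hT20 : T ∉ affineSpan ℝ {fibreProj A₂, fibreProj A₀})
    (h0 : T ∈ affineSpan ℝ {fibreProj A₀, fibreProj Q})
    (h1 : T ∈ affineSpan ℝ {fibreProj A₁, fibreProj R})
    (h2 : T ∈ affineSpan ℝ {fibreProj A₂, fibreProj P}) :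
    (p / (1 - p)) * (q / (1 - q)) * (r / (1 - r)) = 1 :=
  nil_ceva_general A₀ A₁ A₂ hind p q r hp1 hq1 hr1 P Q R hP hQ hR T hT01 hT12 hT20 h0 h1 h2
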